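/- arXiv:2401.01555 — 3 statements merged into one kernel-verified Lean document; each statement's English description precedes it below -/
import Mathlib

section
/- If a real-analytic function f on an open interval U is algebraic (annihilated by a nonzero polynomial P(x,y)), then its derivative f' is also algebraic on a dense open subset of U. -/
def IsAlgebraicOn (f : ℝ → ℝ) (U : Set ℝ) : Prop :=
  ∃ P : MvPolynomial (Fin 2) ℝ, P ≠ 0 ∧ ∀ x ∈ U, MvPolynomial.eval ![x, f x] P = 0

/-!
The germs at `x₀` of functions analytic at `x₀` form an integral domain `A`, which is an algebra
over `ℝ[X]` through polynomial functions. Let `q ∈ ℝ[X][Y]` be a relation `q(x, f) = 0` in `A` of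
least `Y`-degree; then `∂q/∂Y (x, f) ≠ 0` in `A`, and implicit differentiation gives
`∂q/∂Y (x, f) · f' = -∂q/∂X (x, f)`. Both partials evaluated at `(x, f)` lie in `ℝ[X][f]`, hence
are algebraic over `ℝ[X]`, and so is `f'`. The identity theorem spreads the resulting relation
for `f'` from a neighbourhood of `x₀` to the whole interval.
-/

open Polynomial Filter Topology

theorem IsAlgebraic.exists_aeval_eq_zero_aeval_derivative_ne_zero {R S : Type*} [CommRing R]
    [IsAddTorsionFree R] [CommRing S] [Algebra R S] [FaithfulSMul R S] {x : S}
    (hx : IsAlgebraic R x) : ∃ q : R[X], aeval x q = 0 ∧ aeval x (derivative q) ≠ 0 := by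
  classical
  -- an annihilating polynomial of least degree; its derivative is nonzero of smaller degree
  have hex : ∃ n, ∃ q : R[X], q ≠ 0 ∧ aeval x q = 0 ∧ q.natDegree = n :=
    let ⟨q, hq0, hqx⟩ := hx; ⟨_, q, hq0, hqx, rfl⟩
  obtain ⟨q, hq0, hqx, hdeg⟩ := Nat.find_spec hex
  refine ⟨q, hqx, fun hq'x => ?_⟩
  have hpos : q.natDegree ≠ 0 := by
    intro h
    rw [eq_C_of_natDegree_eq_zero h, aeval_C,
      map_eq_zero_iff _ (FaithfulSMul.algebraMap_injective R S)] at hqx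
    exact hq0 (by rw [eq_C_of_natDegree_eq_zero h, hqx, C_0])
  have hmin := Nat.find_min' hex ⟨_, derivative_ne_zero.mpr hpos, hq'x, rfl⟩
  exact (natDegree_derivative_lt hpos).not_ge (hdeg ▸ hmin)

theorem IsAlgebraic.of_aeval_mul_eq_aeval {R S : Type*} [CommRing R] [NoZeroDivisors R]
    [CommRing S] [NoZeroDivisors S] [Algebra R S] {x z : S} {p r : R[X]} (hx : IsAlgebraic R x)
    (hp : aeval x p ≠ 0) (h : aeval x p * z = aeval x r) : IsAlgebraic R z :=
  have halg (s : R[X]) : IsAlgebraic R (aeval x s) :=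
    Algebra.isAlgebraic_adjoin_singleton_iff.mpr hx _ (aeval_mem_adjoin_singleton R x)
  (halg p).of_mul (mem_nonZeroDivisors_of_ne_zero hp) (h ▸ halg r)

theorem MvPolynomial.hasDerivAt_eval {σ 𝕜 : Type*} [Fintype σ] [NontriviallyNormedField 𝕜]
    (P : MvPolynomial σ 𝕜) {v : 𝕜 → σ → 𝕜} {v' : σ → 𝕜} {t : 𝕜} (hv : HasDerivAt v v' t) :
    HasDerivAt (fun s => eval (v s) P) (∑ i, eval (v t) (pderiv i P) * v' i) t := by
  classical
  induction P using MvPolynomial.induction_on with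
  | C c => simpa using hasDerivAt_const t (eval (v t) (C c))
  | add P Q hP hQ =>
    simp only [map_add, add_mul, Finset.sum_add_distrib]
    exact hP.fun_add hQ
  | mul_X P i hP =>
    simp only [map_mul, eval_X]
    refine (hP.fun_mul (hasDerivAt_pi.mp hv i)).congr_deriv ?_
    simp only [pderiv_mul, pderiv_X, map_add, map_mul, eval_X, add_mul,
      Finset.sum_add_distrib, Finset.sum_mul, Pi.single_apply]
    simp [mul_right_comm]

open Polynomial.Bivariate in
theorem Polynomial.Bivariate.eval_equivMvPolynomial {R : Type*} [CommSemiring R] (x y : R)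
    (q : R[X][Y]) : MvPolynomial.eval ![x, y] (equivMvPolynomial R q) = q.evalEval x y := by
  induction q using Polynomial.induction_on' with
  | add p q hp hq => simp [hp, hq]
  | monomial n p =>
    induction p using Polynomial.induction_on' with
    | add p r hp hr => simp_all
    | monomial m a => simp [← C_mul_X_pow_eq_monomial, evalEval_C]

open Polynomial.Bivariate MvPolynomial in
theorem Polynomial.Bivariate.hasDerivAt_evalEval {𝕜 : Type*} [NontriviallyNormedField 𝕜]
    (q : 𝕜[X][Y]) {f : 𝕜 → 𝕜} {f' t : 𝕜} (hf : HasDerivAt f f' t) :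
    HasDerivAt (fun s => q.evalEval s (f s))
      (((equivMvPolynomial 𝕜).symm (pderiv 0 (equivMvPolynomial 𝕜 q))).evalEval t (f t)
        + (derivative q).evalEval t (f t) * f') t := by
  have hv : HasDerivAt (fun s => ![s, f s]) ![1, f'] t := by
    refine hasDerivAt_pi.mpr fun i => ?_
    fin_cases i
    · exact hasDerivAt_id t
    · exact hf
  simpa [← eval_equivMvPolynomial, Fin.sum_univ_two, pderiv_one_equivMvPolynomial]
    using (equivMvPolynomial 𝕜 q).hasDerivAt_eval hv

section AnalyticGerms

open Polynomial.Bivariate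

variable {𝕜 : Type*} [NontriviallyNormedField 𝕜] {x₀ : 𝕜} {f g h : 𝕜 → 𝕜}

theorem AnalyticAt.eventually_eq_zero_or_eventually_eq_zero_of_mul (hg : AnalyticAt 𝕜 g x₀)
    (hh : AnalyticAt 𝕜 h x₀) (hgh : ∀ᶠ z in 𝓝 x₀, g z * h z = 0) :
    (∀ᶠ z in 𝓝 x₀, g z = 0) ∨ ∀ᶠ z in 𝓝 x₀, h z = 0 := by
  refine hg.eventually_eq_zero_or_eventually_ne_zero.imp_right fun hg' => ?_
  refine hh.eventually_eq_zero_or_eventually_ne_zero.resolve_right fun hh' => ?_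
  obtain ⟨z, hgz, hhz, hz⟩ := (hg'.and (hh'.and (hgh.filter_mono nhdsWithin_le_nhds))).exists
  exact mul_ne_zero hgz hhz hz

variable (𝕜) in
def analyticGerms (x₀ : 𝕜) : Subring (Germ (𝓝 x₀) 𝕜) where
  carrier := {γ | ∃ g : 𝕜 → 𝕜, AnalyticAt 𝕜 g x₀ ∧ (g : Germ (𝓝 x₀) 𝕜) = γ}
  mul_mem' := by
    rintro _ _ ⟨g, hg, rfl⟩ ⟨h, hh, rfl⟩
    exact ⟨g * h, hg.mul hh, rfl⟩
  one_mem' := ⟨1, analyticAt_const, rfl⟩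
  add_mem' := by
    rintro _ _ ⟨g, hg, rfl⟩ ⟨h, hh, rfl⟩
    exact ⟨g + h, hg.add hh, rfl⟩
  zero_mem' := ⟨0, analyticAt_const, rfl⟩
  neg_mem' := by
    rintro _ ⟨g, hg, rfl⟩
    exact ⟨-g, hg.neg, rfl⟩

theorem AnalyticAt.coe_mem_analyticGerms (hg : AnalyticAt 𝕜 g x₀) :
    (g : Germ (𝓝 x₀) 𝕜) ∈ analyticGerms 𝕜 x₀ :=
  ⟨g, hg, rfl⟩

def AnalyticAt.germ (hg : AnalyticAt 𝕜 g x₀) : analyticGerms 𝕜 x₀ := ⟨g, hg.coe_mem_analyticGerms⟩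

@[simp]
theorem AnalyticAt.coe_germ (hg : AnalyticAt 𝕜 g x₀) : (hg.germ : Germ (𝓝 x₀) 𝕜) = g := rfl

instance : NoZeroDivisors (analyticGerms 𝕜 x₀) where
  eq_zero_or_eq_zero_of_mul_eq_zero := by
    rintro ⟨_, g, hg, rfl⟩ ⟨_, h, hh, rfl⟩ hgh
    have hgh' : ∀ᶠ z in 𝓝 x₀, g z * h z = 0 := Germ.coe_eq.mp (congrArg Subtype.val hgh)
    exact (hg.eventually_eq_zero_or_eventually_eq_zero_of_mul hh hgh').imp
      (fun hg0 => Subtype.ext (Germ.coe_eq.mpr hg0)) (fun hh0 => Subtype.ext (Germ.coe_eq.mpr hh0))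

instance : IsDomain (analyticGerms 𝕜 x₀) := NoZeroDivisors.to_isDomain _

noncomputable instance : Algebra 𝕜[X] (analyticGerms 𝕜 x₀) :=
  (((Germ.coeRingHom (𝓝 x₀)).comp (RingHom.pi evalRingHom)).codRestrict _
    fun p => (AnalyticOnNhd.eval_polynomial p x₀ trivial).coe_mem_analyticGerms).toAlgebra

theorem AnalyticAt.coe_aeval_germ (hg : AnalyticAt 𝕜 g x₀) (q : 𝕜[X][Y]) :
    (aeval hg.germ q : Germ (𝓝 x₀) 𝕜) = ↑(fun s => q.evalEval s (g s)) := by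
  have : (analyticGerms 𝕜 x₀).subtype.comp (aeval hg.germ).toRingHom =
      (Germ.coeRingHom (𝓝 x₀)).comp (RingHom.pi fun s => evalEvalRingHom s (g s)) := by
    refine Polynomial.ringHom_ext (fun p => ?_) ?_
    · simp only [RingHom.comp_apply, AlgHom.toRingHom_eq_coe, RingHom.coe_coe, aeval_C]
      exact congrArg Germ.ofFun (funext fun s => (evalEval_C s (g s) p).symm)
    · simp only [RingHom.comp_apply, AlgHom.toRingHom_eq_coe, RingHom.coe_coe, aeval_X]
      exact congrArg Germ.ofFun (funext fun s => (evalEval_X s (g s)).symm)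
  exact DFunLike.congr_fun this q

theorem AnalyticAt.aeval_germ_eq_zero_iff (hg : AnalyticAt 𝕜 g x₀) (q : 𝕜[X][Y]) :
    aeval hg.germ q = 0 ↔ ∀ᶠ s in 𝓝 x₀, q.evalEval s (g s) = 0 := by
  rw [← Subtype.val_inj, hg.coe_aeval_germ, ZeroMemClass.coe_zero, ← Germ.coe_zero, Germ.coe_eq]
  rfl

instance : FaithfulSMul 𝕜[X] (analyticGerms 𝕜 x₀) := by
  refine (faithfulSMul_iff_algebraMap_injective _ _).mpr <|
    (injective_iff_map_eq_zero _).mpr fun p hp => p.eq_zero_of_infinite_isRoot ?_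
  have := ((analyticAt_id : AnalyticAt 𝕜 id x₀).aeval_germ_eq_zero_iff (C p)).mp (by rwa [aeval_C])
  simp only [evalEval_C] at this
  exact infinite_of_mem_nhds x₀ this

theorem AnalyticAt.isAlgebraic_germ_iff (hg : AnalyticAt 𝕜 g x₀) :
    IsAlgebraic 𝕜[X] hg.germ ↔
      ∃ P : MvPolynomial (Fin 2) 𝕜, P ≠ 0 ∧ ∀ᶠ s in 𝓝 x₀, MvPolynomial.eval ![s, g s] P = 0 := by
  simp only [IsAlgebraic, hg.aeval_germ_eq_zero_iff, ← eval_equivMvPolynomial]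
  constructor
  · rintro ⟨q, hq, h⟩
    exact ⟨equivMvPolynomial 𝕜 q, by simpa using hq, h⟩
  · rintro ⟨P, hP, h⟩
    exact ⟨(equivMvPolynomial 𝕜).symm P, by simpa using hP, by simpa using h⟩

theorem AnalyticAt.isAlgebraic_germ_deriv [CompleteSpace 𝕜] [CharZero 𝕜] (hf : AnalyticAt 𝕜 f x₀)
    (hF : IsAlgebraic 𝕜[X] hf.germ) : IsAlgebraic 𝕜[X] hf.deriv.germ := by
  obtain ⟨q, hq, hq'⟩ := hF.exists_aeval_eq_zero_aeval_derivative_ne_zero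
  set r := (equivMvPolynomial 𝕜).symm (MvPolynomial.pderiv 0 (equivMvPolynomial 𝕜 q))
  refine hF.of_aeval_mul_eq_aeval hq' (r := -r) (Subtype.ext ?_)
  rw [MulMemClass.coe_mul, hf.coe_aeval_germ, hf.coe_aeval_germ, AnalyticAt.coe_germ,
    ← Germ.coe_mul, Germ.coe_eq]
  filter_upwards [((hf.aeval_germ_eq_zero_iff q).mp hq).eventually_nhds,
    hf.eventually_analyticAt] with t ht hft
  have := (hasDerivAt_evalEval q hft.differentiableAt.hasDerivAt).unique
    ((hasDerivAt_const t 0).congr_of_eventuallyEq ht)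
  rw [Pi.mul_apply, evalEval_neg, eq_neg_iff_add_eq_zero, add_comm]
  exact this

theorem AnalyticOnNhd.eval_mvPolynomial_pair {U : Set 𝕜} (hg : AnalyticOnNhd 𝕜 g U)
    (P : MvPolynomial (Fin 2) 𝕜) : AnalyticOnNhd 𝕜 (fun s => MvPolynomial.eval ![s, g s] P) U := by
  simpa [MvPolynomial.coe_aeval_eq_eval] using
    AnalyticOnNhd.aeval_mvPolynomial (f := fun s => ![s, g s]) (A := 𝕜)
      (Fin.forall_fin_two.mpr ⟨analyticOnNhd_id, hg⟩) P

end AnalyticGerms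

/-- If a real-analytic function on an open interval is algebraic, then its derivative
is algebraic on a dense open subset of the interval. -/
theorem deriv_of_algebraic_is_algebraic (a b : ℝ) (hab : a < b) (f : ℝ → ℝ)
    (hf : AnalyticOn ℝ f (Set.Ioo a b))
    (halg : IsAlgebraicOn f (Set.Ioo a b)) :
    ∃ D : Set ℝ, IsOpen D ∧ D ⊆ Set.Ioo a b ∧ Set.Ioo a b ⊆ closure D ∧
      ∃ Q : MvPolynomial (Fin 2) ℝ, Q ≠ 0 ∧
        ∀ x ∈ D, MvPolynomial.eval ![x, deriv f x] Q = 0 := by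
  obtain ⟨P, hP0, hP⟩ := halg
  have hfan : AnalyticOnNhd ℝ f (Set.Ioo a b) := isOpen_Ioo.analyticOn_iff_analyticOnNhd.mp hf
  obtain ⟨x₀, hx₀⟩ := Set.nonempty_Ioo.mpr hab
  have hF : IsAlgebraic ℝ[X] (hfan x₀ hx₀).germ := (hfan x₀ hx₀).isAlgebraic_germ_iff.mpr
    ⟨P, hP0, eventually_of_mem (isOpen_Ioo.mem_nhds hx₀) hP⟩
  obtain ⟨Q, hQ0, hQ⟩ :=
    (hfan x₀ hx₀).deriv.isAlgebraic_germ_iff.mp ((hfan x₀ hx₀).isAlgebraic_germ_deriv hF)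
  refine ⟨Set.Ioo a b, isOpen_Ioo, subset_rfl, subset_closure, Q, hQ0, fun x hx => ?_⟩
  exact (hfan.deriv.eval_mvPolynomial_pair Q).eqOn_zero_of_preconnected_of_eventuallyEq_zero
    isPreconnected_Ioo hx₀ hQ hx
end

section
/- Let H be real-analytic with H_{zz}(z,·) algebraic in its second variable with nonzero minimal-polynomial relation, and suppose ∂_{z̄}H_{zz} ≢ 0 (so H_{zz}(z,·) is nonconstant). Let A(z,p) be real-analytic and define Φ(z,p) = H_{zz}(z, A(z,p)). If Φ(z,·) is algebraic in p, then A(z,·) is algebraic in p. -/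
/-!
Functions analytic on an interval form an integral domain (identity theorem), so algebraic
dependence of two of them can be read as the failure of algebraic independence there. If
`Φ = h ∘ A` is nonconstant, it is transcendental, and both `p ↦ p` and `A` are algebraic over
`ℝ[Φ]` (the latter since `P(A, Φ) = 0`), so they are algebraically dependent. If `Φ` is constant,
so is `A`: otherwise `h` would be constant on an interval, hence on `(a, b)` by the identity
theorem, contradicting `h' ≢ 0`.
-/

open Set Algebra Filter Topology

section Pair

variable {K A : Type*} [Field K] [CommRing A] [Algebra K A]

theorem Transcendental.not_algebraicIndependent_pair_iff {a b : A} (ha : Transcendental K a) :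
    ¬ AlgebraicIndependent K ![a, b] ↔ IsAlgebraic (adjoin K {a}) b := by
  have hx : AlgebraicIndependent K (fun _ : Fin 1 ↦ a) := by simpa using ha
  have key := hx.option_iff_transcendental b
  rw [range_const] at key
  rw [← not_not (a := IsAlgebraic _ b), ← Transcendental, ← key,
    algebraicIndependent_equiv' (finSuccEquiv' 1)
      (f := fun o ↦ o.elim b fun _ ↦ a) (by ext i; fin_cases i <;> rfl)]

theorem Transcendental.not_algebraicIndependent_pair_trans [IsDomain A] {x y w : A}
    (hw : Transcendental K w) (hxw : ¬ AlgebraicIndependent K ![x, w])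
    (hwy : ¬ AlgebraicIndependent K ![w, y]) : ¬ AlgebraicIndependent K ![x, y] := by
  intro hxy
  have hx : Transcendental K x := by simpa using hxy.transcendental 0
  have hwx : IsAlgebraic (adjoin K {x}) w := hx.not_algebraicIndependent_pair_iff.1 hxw
  have hyw : IsAlgebraic (adjoin K {w}) y := hw.not_algebraicIndependent_pair_iff.1 hwy
  refine hx.not_algebraicIndependent_pair_iff.2 ?_ hxy
  refine hyw.adjoin_of_forall_isAlgebraic fun z hz ↦ ?_
  rwa [mem_singleton_iff.1 hz.1]

end Pair

def analyticOnNhdSubalgebra (U : Set ℝ) : Subalgebra ℝ (U → ℝ) where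
  carrier := {f | ∃ F : ℝ → ℝ, AnalyticOnNhd ℝ F U ∧ U.domRestrict F = f}
  mul_mem' := by rintro _ _ ⟨F, hF, rfl⟩ ⟨G, hG, rfl⟩; exact ⟨F * G, hF.mul hG, rfl⟩
  add_mem' := by rintro _ _ ⟨F, hF, rfl⟩ ⟨G, hG, rfl⟩; exact ⟨F + G, hF.add hG, rfl⟩
  algebraMap_mem' r := ⟨fun _ ↦ r, analyticOnNhd_const, rfl⟩

namespace analyticOnNhdSubalgebra

variable {U : Set ℝ}

def mk {f : ℝ → ℝ} (hf : AnalyticOnNhd ℝ f U) : analyticOnNhdSubalgebra U :=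
  ⟨U.domRestrict f, f, hf, rfl⟩

theorem aeval_apply {σ : Type*} (v : σ → analyticOnNhdSubalgebra U)
    (P : MvPolynomial σ ℝ) (x : U) :
    (MvPolynomial.aeval v P : U → ℝ) x = MvPolynomial.eval (fun i ↦ (v i : U → ℝ) x) P := by
  rw [← MvPolynomial.coe_aeval_eq_eval]
  exact MvPolynomial.comp_aeval_apply _
    ((Pi.evalAlgHom ℝ (fun _ ↦ ℝ) x).comp (analyticOnNhdSubalgebra U).val) P

theorem aeval_eq_zero_iff {σ : Type*} (v : σ → analyticOnNhdSubalgebra U)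
    (P : MvPolynomial σ ℝ) :
    MvPolynomial.aeval v P = 0 ↔ ∀ x : U, MvPolynomial.eval (fun i ↦ (v i : U → ℝ) x) P = 0 := by
  simp only [← aeval_apply, Subtype.ext_iff, funext_iff, ZeroMemClass.coe_zero, Pi.zero_apply]

theorem transcendental_mk {g : ℝ → ℝ} (hg : AnalyticOnNhd ℝ g U) (hinf : (g '' U).Infinite) :
    Transcendental ℝ (mk hg) := by
  rintro ⟨q, hq, hq0⟩
  refine hq (Polynomial.eq_zero_of_infinite_isRoot q (hinf.mono ?_))
  rintro _ ⟨x, hx, rfl⟩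
  have := congrFun (congrArg Subtype.val hq0) ⟨x, hx⟩
  simp only [Polynomial.aeval_subalgebra_coe, Polynomial.aeval_fn_apply,
    Polynomial.coe_aeval_eq_eval, ZeroMemClass.coe_zero, Pi.zero_apply] at this
  exact this

theorem noZeroDivisors (hU : IsOpen U) (hU' : IsPreconnected U) :
    NoZeroDivisors (analyticOnNhdSubalgebra U) := by
  refine ⟨fun {f g} hfg ↦ ?_⟩
  obtain ⟨_, F, hF, rfl⟩ := f
  obtain ⟨_, G, hG, rfl⟩ := g
  have hFG (x : ℝ) (hx : x ∈ U) : F x * G x = 0 := congrFun (congrArg Subtype.val hfg) ⟨x, hx⟩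
  rcases U.eq_empty_or_nonempty with rfl | ⟨x₀, hx₀⟩
  · exact Or.inl (Subtype.ext (funext fun x ↦ x.2.elim))
  have hev : ∀ᶠ x in 𝓝[≠] x₀, F x = 0 ∨ G x = 0 := by
    filter_upwards [nhdsWithin_le_nhds (hU.mem_nhds hx₀)] with x hx
    exact mul_eq_zero.1 (hFG x hx)
  rcases frequently_or_distrib.1 hev.frequently with h | h
  · exact Or.inl (Subtype.ext (funext fun x ↦
      hF.eqOn_zero_of_preconnected_of_frequently_eq_zero hU' hx₀ h x.2))
  · exact Or.inr (Subtype.ext (funext fun x ↦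
      hG.eqOn_zero_of_preconnected_of_frequently_eq_zero hU' hx₀ h x.2))

end analyticOnNhdSubalgebra

-- `IsAlgebraicOn f U` is `AlgDependentOn id f U` by definition.
def AlgDependentOn (f g : ℝ → ℝ) (U : Set ℝ) : Prop :=
  ∃ P : MvPolynomial (Fin 2) ℝ, P ≠ 0 ∧ ∀ x ∈ U, MvPolynomial.eval ![f x, g x] P = 0

namespace AlgDependentOn

variable {f g k : ℝ → ℝ} {U V : Set ℝ}

theorem symm (h : AlgDependentOn f g U) : AlgDependentOn g f U := by
  obtain ⟨P, hP, hPU⟩ := h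
  refine ⟨MvPolynomial.rename (Equiv.swap 0 1) P, ?_, fun x hx ↦ ?_⟩
  · exact (map_ne_zero_iff _ (MvPolynomial.rename_injective _ (Equiv.injective _))).2 hP
  · have hswap : ![g x, f x] ∘ Equiv.swap 0 1 = ![f x, g x] := by ext i; fin_cases i <;> rfl
    rw [MvPolynomial.eval_rename, hswap]
    exact hPU x hx

theorem comp (h : AlgDependentOn f g V) {A : ℝ → ℝ} (hA : MapsTo A U V) :
    AlgDependentOn (f ∘ A) (g ∘ A) U :=
  let ⟨P, hP, hPV⟩ := h
  ⟨P, hP, fun x hx ↦ hPV (A x) (hA hx)⟩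

open analyticOnNhdSubalgebra in
theorem iff_not_algebraicIndependent (hf : AnalyticOnNhd ℝ f U) (hg : AnalyticOnNhd ℝ g U) :
    AlgDependentOn f g U ↔ ¬ AlgebraicIndependent ℝ ![mk hf, mk hg] := by
  have hval (x : U) : (fun i ↦ (![mk hf, mk hg] i : U → ℝ) x) = ![f x, g x] := by
    ext i; fin_cases i <;> rfl
  simp only [algebraicIndependent_iff, aeval_eq_zero_iff, hval, Subtype.forall, not_forall,
    exists_prop, and_comm, AlgDependentOn]

open analyticOnNhdSubalgebra in
theorem trans (hU : IsOpen U) (hU' : IsPreconnected U) (hf : AnalyticOnNhd ℝ f U)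
    (hg : AnalyticOnNhd ℝ g U) (hk : AnalyticOnNhd ℝ k U) (hinf : (g '' U).Infinite)
    (hfg : AlgDependentOn f g U) (hgk : AlgDependentOn g k U) : AlgDependentOn f k U := by
  have := noZeroDivisors hU hU'
  have : Nonempty U := hinf.nonempty.of_image.to_subtype
  have : IsDomain (analyticOnNhdSubalgebra U) := NoZeroDivisors.to_isDomain _
  rw [iff_not_algebraicIndependent hf hk]
  exact (transcendental_mk hg hinf).not_algebraicIndependent_pair_trans
    ((iff_not_algebraicIndependent hf hg).1 hfg) ((iff_not_algebraicIndependent hg hk).1 hgk)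

end AlgDependentOn

theorem isAlgebraicOn_of_subsingleton_image {f : ℝ → ℝ} {U : Set ℝ} (hf : (f '' U).Subsingleton) :
    IsAlgebraicOn f U := by
  rcases U.eq_empty_or_nonempty with rfl | ⟨x₀, hx₀⟩
  · exact ⟨1, one_ne_zero, fun x hx ↦ hx.elim⟩
  refine ⟨MvPolynomial.X 1 - MvPolynomial.C (f x₀), fun h0 ↦ ?_, fun x hx ↦ ?_⟩
  · simpa using congrArg (MvPolynomial.eval ![0, f x₀ + 1]) h0
  · simp [hf (mem_image_of_mem f hx) (mem_image_of_mem f hx₀)]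

theorem subsingleton_image_of_subsingleton_image_comp {a b : ℝ} {h A : ℝ → ℝ} {U : Set ℝ}
    (hh : AnalyticOnNhd ℝ h (Ioo a b)) (hnc : ∃ t ∈ Ioo a b, deriv h t ≠ 0)
    (hU : IsPreconnected U) (hA : ContinuousOn A U) (hmap : MapsTo A U (Ioo a b))
    (hΦ : ((h ∘ A) '' U).Subsingleton) : (A '' U).Subsingleton := by
  rw [← not_nontrivial_iff]
  intro hnt
  obtain ⟨_, ⟨p, hp, rfl⟩, _, ⟨q, hq, rfl⟩, hlt⟩ := hnt.exists_lt
  have hIcc : Icc (A p) (A q) ⊆ A '' U := (hU.image A hA).Icc_subset ⟨p, hp, rfl⟩ ⟨q, hq, rfl⟩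
  have hconst : EqOn h (fun _ ↦ h (A p)) (Icc (A p) (A q)) := by
    rintro _ hs
    obtain ⟨r, hr, rfl⟩ := hIcc hs
    exact hΦ (mem_image_of_mem _ hr) (mem_image_of_mem _ hp)
  obtain ⟨m, hm⟩ := nonempty_Ioo.2 hlt
  have hm_ab : m ∈ Ioo a b := by
    obtain ⟨r, hr, hrm⟩ := hIcc (Ioo_subset_Icc_self hm)
    exact hrm ▸ hmap hr
  have hloc : h =ᶠ[𝓝 m] fun _ ↦ h (A p) :=
    eventually_of_mem (Ioo_mem_nhds hm.1 hm.2) fun s hs ↦ hconst (Ioo_subset_Icc_self hs)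
  have hglob := hh.eqOn_of_preconnected_of_eventuallyEq analyticOnNhd_const isPreconnected_Ioo
    hm_ab hloc
  obtain ⟨t, ht, hder⟩ := hnc
  refine hder ?_
  rw [EventuallyEq.deriv_eq (eventually_of_mem (Ioo_mem_nhds ht.1 ht.2) hglob),
    deriv_const]

theorem algebraic_of_comp_with_nonconstant_algebraic_general (a b c d : ℝ) (h A : ℝ → ℝ)
    (hh : AnalyticOn ℝ h (Set.Ioo a b))
    (hhalg : IsAlgebraicOn h (Set.Ioo a b))
    (hnc : ∃ t ∈ Set.Ioo a b, deriv h t ≠ 0)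
    (hA : AnalyticOn ℝ A (Set.Ioo c d))
    (hmap : Set.MapsTo A (Set.Ioo c d) (Set.Ioo a b))
    (hΦ : IsAlgebraicOn (fun p => h (A p)) (Set.Ioo c d)) :
    IsAlgebraicOn A (Set.Ioo c d) := by
  rw [isOpen_Ioo.analyticOn_iff_analyticOnNhd] at hh hA
  have hΦa : AnalyticOnNhd ℝ (h ∘ A) (Ioo c d) := hh.comp hA hmap
  rcases ((h ∘ A) '' Ioo c d).subsingleton_or_nontrivial with hconst | hnonconst
  · exact isAlgebraicOn_of_subsingleton_image
      (subsingleton_image_of_subsingleton_image_comp hh hnc isPreconnected_Ioo hA.continuousOn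
        hmap hconst)
  · have hinf := (isPreconnected_Ioo.image _ hΦa.continuousOn).infinite_of_nontrivial hnonconst
    exact AlgDependentOn.trans isOpen_Ioo isPreconnected_Ioo analyticOnNhd_id hΦa hA hinf hΦ
      (AlgDependentOn.comp hhalg hmap).symm

/-- If `h` (here `h(t) = H_{zz}(z,t)` for fixed `z`) is analytic, algebraic and
nonconstant (`h' ≢ 0`) on an interval, `A` is analytic mapping an interval `J` into it,
and the composite `Φ = h ∘ A` is algebraic on `J`, then `A` is algebraic on `J`. -/
theorem algebraic_of_comp_with_nonconstant_algebraic (a b c d : ℝ) (hab : a < b)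
    (hcd : c < d) (h A : ℝ → ℝ)
    (hh : AnalyticOn ℝ h (Set.Ioo a b))
    (hhalg : IsAlgebraicOn h (Set.Ioo a b))
    (hnc : ∃ t ∈ Set.Ioo a b, deriv h t ≠ 0)
    (hA : AnalyticOn ℝ A (Set.Ioo c d))
    (hmap : Set.MapsTo A (Set.Ioo c d) (Set.Ioo a b))
    (hΦ : IsAlgebraicOn (fun p => h (A p)) (Set.Ioo c d)) :
    IsAlgebraicOn A (Set.Ioo c d) :=
  algebraic_of_comp_with_nonconstant_algebraic_general a b c d h A hh hhalg hnc hA hmap hΦ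
end

section
/- Contrapositive obstruction: with h analytic, algebraic, and nonconstant on an interval, and A analytic with A not algebraic, the composite Φ = h ∘ A is not algebraic. -/
/-!
On a subinterval `U`, regard `x ↦ x`, `A` and `Φ = h ∘ A` as elements of the integral domain of
functions analytic on `U`. If `Φ` is a root of a nonzero polynomial, it is constant on `U`; then so
is `A`, because the nonconstant analytic function `h` is constant on no nondegenerate interval.
Otherwise `Φ` is transcendental, and the relations `Q(x, Φ) = 0` and `P(A, Φ) = 0` make `x` and `A`
algebraic over `ℝ[Φ]`; since algebraic independence is a matroid, two elements in the algebraic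
closure of a single one are dependent. Either way `A` is algebraic on `U`, hence, by the identity
theorem, on all of `(c, d)`.
-/

open Algebra Set

section AlgebraicIndependence

variable {R A : Type*} [CommRing R] [CommRing A] [Algebra R A]

theorem isAlgebraic_adjoin_singleton_of_not_algebraicIndependent {x y : A}
    (hy : Transcendental R y) (hxy : ¬ AlgebraicIndependent R ![x, y]) :
    IsAlgebraic (adjoin R {y}) x := by
  have hy' : AlgebraicIndependent R (fun _ : Unit ↦ y) :=
    (algebraicIndependent_singleton_iff ()).mpr hy
  by_contra hx
  have hx' : Transcendental (adjoin R (range fun _ : Unit ↦ y)) x := by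
    rwa [range_const]
  refine hxy ?_
  convert ((hy'.option_iff_transcendental x).mpr hx').comp ![none, some ()] (by decide)
  ext i; fin_cases i <;> rfl

theorem not_algebraicIndependent_of_isAlgebraic_adjoin_singleton [IsDomain A] [FaithfulSMul R A]
    {x y z : A} (hx : IsAlgebraic (adjoin R {z}) x) (hy : IsAlgebraic (adjoin R {z}) y) :
    ¬ AlgebraicIndependent R ![x, y] := by
  intro hind
  have := (algebraMap R A).domain_nontrivial
  let M := AlgebraicIndependent.matroid R A
  have hsub : range ![x, y] ⊆ M.closure {z} := by
    rintro _ ⟨i, rfl⟩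
    rw [AlgebraicIndependent.matroid_closure_eq, SetLike.mem_coe, Subalgebra.mem_algebraicClosure]
    fin_cases i <;> assumption
  have hxy : x ≠ y := hind.injective.ne (a₁ := 0) (a₂ := 1) (by decide)
  -- an independent pair inside the closure of a single element would give that closure rank 2
  have hle := (show M.Indep _ from hind.to_subtype_range).encard_le_eRk_of_subset hsub
  rw [M.eRk_closure_eq, Matrix.range_cons, Matrix.range_cons, Matrix.range_empty,
    union_empty, singleton_union, encard_pair hxy] at hle
  have := hle.trans (M.eRk_le_encard _)
  simp at this

end AlgebraicIndependence

-- `IsAlgebraicOn f U` is `AlgebraicallyDependentOn id f U` by unfolding.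
def AlgebraicallyDependentOn {𝕜 : Type*} [CommRing 𝕜] (f g : 𝕜 → 𝕜) (U : Set 𝕜) : Prop :=
  ∃ P : MvPolynomial (Fin 2) 𝕜, P ≠ 0 ∧ ∀ x ∈ U, MvPolynomial.eval ![f x, g x] P = 0

section AnalyticSubalgebra

variable {𝕜 : Type*} [NontriviallyNormedField 𝕜] {U : Set 𝕜}

variable (U) in
def analyticSubalgebra : Subalgebra 𝕜 (U → 𝕜) where
  carrier := {f | ∃ F : 𝕜 → 𝕜, AnalyticOnNhd 𝕜 F U ∧ U.domRestrict F = f}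
  mul_mem' := by
    rintro _ _ ⟨F, hF, rfl⟩ ⟨G, hG, rfl⟩
    exact ⟨F * G, hF.mul hG, rfl⟩
  add_mem' := by
    rintro _ _ ⟨F, hF, rfl⟩ ⟨G, hG, rfl⟩
    exact ⟨F + G, hF.add hG, rfl⟩
  algebraMap_mem' c := ⟨fun _ ↦ c, analyticOnNhd_const, rfl⟩

def AnalyticOnNhd.restrict {f : 𝕜 → 𝕜} (hf : AnalyticOnNhd 𝕜 f U) : analyticSubalgebra U :=
  ⟨U.domRestrict f, f, hf, rfl⟩

theorem analyticSubalgebra.isDomain (hU : IsPreconnected U) (hne : U.Nonempty) :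
    IsDomain (analyticSubalgebra U) := by
  have : Nonempty U := hne.to_subtype
  refine @NoZeroDivisors.to_isDomain _ _ _ ⟨?_⟩
  rintro ⟨_, F, hF, rfl⟩ ⟨_, G, hG, rfl⟩ hFG
  rcases hF.eq_zero_or_eq_zero_of_mul_eq_zero hG
      (fun z hz ↦ congrFun (congrArg Subtype.val hFG) ⟨z, hz⟩) hU with h | h
  · exact Or.inl (Subtype.ext (funext fun z ↦ h z z.2))
  · exact Or.inr (Subtype.ext (funext fun z ↦ h z z.2))

theorem analyticSubalgebra.aeval_eq_zero_iff {σ : Type*} (v : σ → analyticSubalgebra U)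
    (P : MvPolynomial σ 𝕜) :
    MvPolynomial.aeval v P = 0 ↔ ∀ x : U, MvPolynomial.eval (fun i ↦ (v i : U → 𝕜) x) P = 0 := by
  rw [← Subtype.val_inj, funext_iff]
  refine forall_congr' fun x ↦ ?_
  exact Eq.congr_left <| MvPolynomial.comp_aeval_apply (f := v)
    ((Pi.evalAlgHom 𝕜 _ x).comp (analyticSubalgebra U).val) P

theorem analyticSubalgebra.transcendental {k : 𝕜 → 𝕜} (hk : AnalyticOnNhd 𝕜 k U)
    (hktr : ∀ q : Polynomial 𝕜, q ≠ 0 → ∃ x ∈ U, q.eval (k x) ≠ 0) :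
    Transcendental 𝕜 hk.restrict := by
  refine transcendental_iff.mpr fun q hq ↦ by_contra fun hq0 ↦ ?_
  obtain ⟨x, hx, hne⟩ := hktr q hq0
  have := Polynomial.aeval_algHom_apply
    ((Pi.evalAlgHom 𝕜 _ ⟨x, hx⟩).comp (analyticSubalgebra U).val) hk.restrict q
  rw [hq, map_zero, Polynomial.coe_aeval_eq_eval] at this
  exact hne this

theorem algebraicallyDependentOn_iff_not_algebraicIndependent {f g : 𝕜 → 𝕜}
    (hf : AnalyticOnNhd 𝕜 f U) (hg : AnalyticOnNhd 𝕜 g U) :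
    AlgebraicallyDependentOn f g U ↔ ¬ AlgebraicIndependent 𝕜 ![hf.restrict, hg.restrict] := by
  have hpair (x : U) : (fun i ↦ ((![hf.restrict, hg.restrict] i : analyticSubalgebra U) : U → 𝕜) x)
      = ![f x, g x] := by
    ext i; fin_cases i <;> rfl
  simp only [algebraicIndependent_iff, analyticSubalgebra.aeval_eq_zero_iff, hpair, Subtype.forall,
    not_forall, exists_prop, AlgebraicallyDependentOn, and_comm]

end AnalyticSubalgebra

section AlgebraicallyDependentOn

variable {𝕜 : Type*} [NontriviallyNormedField 𝕜] {U : Set 𝕜} {f g k : 𝕜 → 𝕜}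

theorem AlgebraicallyDependentOn.of_transcendental (hU : IsPreconnected U)
    (hf : AnalyticOnNhd 𝕜 f U) (hg : AnalyticOnNhd 𝕜 g U) (hk : AnalyticOnNhd 𝕜 k U)
    (hktr : ∀ q : Polynomial 𝕜, q ≠ 0 → ∃ x ∈ U, q.eval (k x) ≠ 0)
    (hfk : AlgebraicallyDependentOn f k U) (hgk : AlgebraicallyDependentOn g k U) :
    AlgebraicallyDependentOn f g U := by
  obtain ⟨x₀, hx₀, -⟩ := hktr 1 one_ne_zero
  have := analyticSubalgebra.isDomain hU ⟨x₀, hx₀⟩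
  have : FaithfulSMul 𝕜 (analyticSubalgebra U) :=
    (faithfulSMul_iff_algebraMap_injective _ _).mpr (algebraMap 𝕜 _).injective
  have hK := analyticSubalgebra.transcendental hk hktr
  rw [algebraicallyDependentOn_iff_not_algebraicIndependent hf hk] at hfk
  rw [algebraicallyDependentOn_iff_not_algebraicIndependent hg hk] at hgk
  rw [algebraicallyDependentOn_iff_not_algebraicIndependent hf hg]
  exact not_algebraicIndependent_of_isAlgebraic_adjoin_singleton
    (isAlgebraic_adjoin_singleton_of_not_algebraicIndependent hK hfk)
    (isAlgebraic_adjoin_singleton_of_not_algebraicIndependent hK hgk)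

theorem algebraicallyDependentOn_of_eqOn_const {c : 𝕜} (hg : EqOn g (fun _ ↦ c) U) :
    AlgebraicallyDependentOn f g U := by
  refine ⟨.X 1 - .C c, fun h ↦ ?_, fun x hx ↦ by simp [hg hx]⟩
  simpa using congrArg (MvPolynomial.eval fun i ↦ if i = 1 then c + 1 else 0) h

theorem AlgebraicallyDependentOn.of_subset {V : Set 𝕜} (hf : AnalyticOnNhd 𝕜 f U)
    (hg : AnalyticOnNhd 𝕜 g U) (hU : IsPreconnected U) (hV : IsOpen V) (hVne : V.Nonempty)
    (hVU : V ⊆ U) (hfg : AlgebraicallyDependentOn f g V) : AlgebraicallyDependentOn f g U := by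
  obtain ⟨P, hP, hPV⟩ := hfg
  obtain ⟨x₀, hx₀⟩ := hVne
  have hPU : AnalyticOnNhd 𝕜 (fun x ↦ MvPolynomial.eval ![f x, g x] P) U :=
    AnalyticOnNhd.aeval_mvPolynomial (fun i ↦ by fin_cases i <;> simpa) P
  refine ⟨P, hP, hPU.eqOn_zero_of_preconnected_of_eventuallyEq_zero hU (hVU hx₀) ?_⟩
  filter_upwards [hV.mem_nhds hx₀] with x hx using hPV x hx

end AlgebraicallyDependentOn

section IdentityPrinciple

variable {𝕜 : Type*} [NontriviallyNormedField 𝕜] {E : Type*} [NormedAddCommGroup E]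
  [NormedSpace 𝕜 E] {U S : Set 𝕜} {f g : 𝕜 → E}

theorem AnalyticOnNhd.eqOn_of_preconnected_of_eqOn (hf : AnalyticOnNhd 𝕜 f U)
    (hg : AnalyticOnNhd 𝕜 g U) (hU : IsPreconnected U) (hS : IsPreconnected S)
    (hSnt : S.Nontrivial) (hSU : S ⊆ U) (hfg : EqOn f g S) : EqOn f g U := by
  obtain ⟨z, hz⟩ := hSnt.nonempty
  refine hf.eqOn_of_preconnected_of_frequently_eq hg hU (hSU hz) ?_
  exact (Filter.frequently_mem_iff_neBot.mpr (hS.preperfect_of_nontrivial hSnt z hz)).mono hfg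

theorem AnalyticOnNhd.subsingleton_of_subsingleton_image (hf : AnalyticOnNhd 𝕜 f U)
    (hUo : IsOpen U) (hU : IsPreconnected U) (hnc : ∃ z ∈ U, deriv f z ≠ 0)
    (hS : IsPreconnected S) (hSU : S ⊆ U) (hfS : (f '' S).Subsingleton) : S.Subsingleton := by
  by_contra hSnt
  rw [not_subsingleton_iff] at hSnt
  obtain ⟨z₀, hz₀⟩ := hSnt.nonempty
  have hconst : EqOn f (fun _ ↦ f z₀) U :=
    hf.eqOn_of_preconnected_of_eqOn analyticOnNhd_const hU hS hSnt hSU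
      fun z hz ↦ hfS (mem_image_of_mem f hz) (mem_image_of_mem f hz₀)
  obtain ⟨z, hz, hfz⟩ := hnc
  exact hfz ((hconst.eventuallyEq_of_mem (hUo.mem_nhds hz)).deriv_eq.trans (deriv_const _ _))

end IdentityPrinciple

theorem comp_not_algebraic_of_not_algebraic_general (a b c d : ℝ)
    (h A : ℝ → ℝ)
    (hh : AnalyticOn ℝ h (Set.Ioo a b))
    (hhalg : IsAlgebraicOn h (Set.Ioo a b))
    (hnc : ∃ t ∈ Set.Ioo a b, deriv h t ≠ 0)
    (hA : AnalyticOn ℝ A (Set.Ioo c d))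
    (hmap : Set.MapsTo A (Set.Ioo c d) (Set.Ioo a b))
    (hAtrans : ¬ IsAlgebraicOn A (Set.Ioo c d)) :
    ∀ c' d' : ℝ, c' < d' → Set.Ioo c' d' ⊆ Set.Ioo c d →
      ¬ ∃ Q : MvPolynomial (Fin 2) ℝ, Q ≠ 0 ∧
        ∀ p ∈ Set.Ioo c' d', MvPolynomial.eval ![p, h (A p)] Q = 0 := by
  rintro c' d' hcd' hsub ⟨Q, hQ, hQhA⟩
  have hh := isOpen_Ioo.analyticOn_iff_analyticOnNhd.mp hh
  have hA := isOpen_Ioo.analyticOn_iff_analyticOnNhd.mp hA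
  have hAU : AnalyticOnNhd ℝ A (Ioo c' d') := hA.mono hsub
  have hmapU : MapsTo A (Ioo c' d') (Ioo a b) := hmap.mono_left hsub
  have hhA : AnalyticOnNhd ℝ (h ∘ A) (Ioo c' d') := hh.comp hAU hmapU
  refine hAtrans (AlgebraicallyDependentOn.of_subset analyticOnNhd_id hA isPreconnected_Ioo
    isOpen_Ioo (nonempty_Ioo.mpr hcd') hsub ?_)
  by_cases hhAalg : ∃ q : Polynomial ℝ, q ≠ 0 ∧ ∀ x ∈ Ioo c' d', q.eval (h (A x)) = 0
  · obtain ⟨q, hq, hqhA⟩ := hhAalg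
    obtain ⟨t₀, ht₀⟩ := nonempty_Ioo.mpr hcd'
    have hhAconst : ((h ∘ A) '' Ioo c' d').Subsingleton := by
      rintro _ ⟨s, hs, rfl⟩ _ ⟨t, ht, rfl⟩
      exact isPreconnected_Ioo.constant_of_mapsTo
        (Polynomial.finite_setOfPred_isRoot hq).isDiscrete hhA.continuousOn hqhA hs ht
    have hAconst : (A '' Ioo c' d').Subsingleton :=
      hh.subsingleton_of_subsingleton_image isOpen_Ioo isPreconnected_Ioo hnc
        (isPreconnected_Ioo.image A hAU.continuousOn) hmapU.image_subset
        (by rwa [← image_comp])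
    exact algebraicallyDependentOn_of_eqOn_const
      fun x hx ↦ hAconst (mem_image_of_mem A hx) (mem_image_of_mem A ht₀)
  · push Not at hhAalg
    obtain ⟨P, hP, hPh⟩ := hhalg
    exact AlgebraicallyDependentOn.of_transcendental isPreconnected_Ioo analyticOnNhd_id hAU hhA
      hhAalg ⟨Q, hQ, hQhA⟩ ⟨P, hP, fun x hx ↦ hPh (A x) (hmapU hx)⟩

/-- Contrapositive obstruction: if `h` is analytic, algebraic and nonconstant on an
interval, and `A` is analytic, maps into it, and is not algebraic, then `h ∘ A` is not
algebraic on any nonempty open subinterval. -/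
theorem comp_not_algebraic_of_not_algebraic (a b c d : ℝ) (hab : a < b) (hcd : c < d)
    (h A : ℝ → ℝ)
    (hh : AnalyticOn ℝ h (Set.Ioo a b))
    (hhalg : IsAlgebraicOn h (Set.Ioo a b))
    (hnc : ∃ t ∈ Set.Ioo a b, deriv h t ≠ 0)
    (hA : AnalyticOn ℝ A (Set.Ioo c d))
    (hmap : Set.MapsTo A (Set.Ioo c d) (Set.Ioo a b))
    (hAtrans : ¬ IsAlgebraicOn A (Set.Ioo c d)) :
    ∀ c' d' : ℝ, c' < d' → Set.Ioo c' d' ⊆ Set.Ioo c d →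
      ¬ ∃ Q : MvPolynomial (Fin 2) ℝ, Q ≠ 0 ∧
        ∀ p ∈ Set.Ioo c' d', MvPolynomial.eval ![p, h (A p)] Q = 0 :=
  comp_not_algebraic_of_not_algebraic_general a b c d h A hh hhalg hnc hA hmap hAtrans
end
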